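/- If the accumulated error satisfies |∑_{i∈S} e_i| < ⌊q/4⌋ (with errors taken as centered representatives mod q), then the LWE decryption of a well-formed ciphertext recovers the encrypted bit: for ciphertext (a,b) with a = ∑_{i∈S} a_i and b = ∑_{i∈S}(⟨a_i,s⟩ + e_i) + r⌊q/2⌋ (mod q), one has Q(b − ⟨a,s⟩) = r. -/

import Mathlib

/-- The lattice-PUF quantizer: maps `x ∈ ℤ_q` to `0` if its representative in `[0,q)`
lies in `[0, q/4] ∪ (3q/4, q-1]`, and to `1` if it lies in `(q/4, 3q/4]`. -/
def Q (q : ℕ) (x : ZMod q) : ℕ :=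
  if q / 4 < x.val ∧ x.val ≤ 3 * q / 4 then 1 else 0

/-!
Subtracting `⟨∑ aᵢ, s⟩` from `b` cancels the secret part exactly, leaving the integer
`∑ eᵢ + r⌊q/2⌋` reduced mod `q`. Since `|∑ eᵢ| < ⌊q/4⌋`, this integer lies within `⌊q/4⌋`
of `0` when `r = 0` and of `⌊q/2⌋` when `r = 1`, so its representative in `[0, q)` falls in the
region the quantizer sends to `r`.
-/

theorem sum_dotProduct_add_sub_dotProduct_sum {R ι κ : Type*} [CommRing R] [Fintype κ]
    (S : Finset ι) (a : ι → κ → R) (s : κ → R) (e : ι → R) (c : R) :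
    (∑ i ∈ S, (a i ⬝ᵥ s + e i)) + c - (∑ i ∈ S, a i) ⬝ᵥ s = ∑ i ∈ S, e i + c := by
  rw [Finset.sum_add_distrib, sum_dotProduct]
  ring

namespace ZMod

variable {q : ℕ} [NeZero q] {m : ℤ}

theorem val_intCast_of_nonneg_of_lt (h0 : 0 ≤ m) (hq : m < q) : ((m : ZMod q).val : ℤ) = m := by
  rw [val_intCast, Int.emod_eq_of_lt h0 hq]

theorem val_intCast_of_neg (hq : -q ≤ m) (h0 : m < 0) : ((m : ZMod q).val : ℤ) = m + q := by
  rw [val_intCast, ← Int.add_emod_right, Int.emod_eq_of_lt (by omega) (by omega)]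

end ZMod

section Quantizer

variable {q : ℕ} {E : ℤ}

theorem Q_intCast_of_abs_lt (hE : |E| < (q / 4 : ℕ)) : Q q (E : ZMod q) = 0 := by
  rw [abs_lt] at hE
  have : NeZero q := ⟨by omega⟩
  unfold Q
  rcases le_or_gt 0 E with hE₀ | hE₀
  · have hval := ZMod.val_intCast_of_nonneg_of_lt (q := q) hE₀ (by omega)
    split_ifs <;> omega
  · have hval := ZMod.val_intCast_of_neg (q := q) (by omega) hE₀
    split_ifs <;> omega

theorem Q_intCast_add_half_of_abs_lt (hE : |E| < (q / 4 : ℕ)) :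
    Q q ((E + (q / 2 : ℕ) : ℤ) : ZMod q) = 1 := by
  rw [abs_lt] at hE
  have : NeZero q := ⟨by omega⟩
  have hval := ZMod.val_intCast_of_nonneg_of_lt (q := q) (m := E + (q / 2 : ℕ))
    (by omega) (by omega)
  unfold Q
  split_ifs <;> omega

end Quantizer

theorem lwe_decryption_correct_general
    (q n : ℕ)
    {ι : Type} (S : Finset ι)
    (s : Fin n → ZMod q) (a : ι → Fin n → ZMod q) (e : ι → ℤ)
    (r : ℕ) (hr : r ≤ 1)
    (herr : |∑ i ∈ S, e i| < (q / 4 : ℕ))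
    (aSum : Fin n → ZMod q) (b : ZMod q)
    (ha : aSum = ∑ i ∈ S, a i)
    (hb : b = (∑ i ∈ S, ((∑ j, a i j * s j) + (e i : ZMod q))) + (r : ZMod q) * ((q / 2 : ℕ) : ZMod q)) :
    Q q (b - ∑ j, aSum j * s j) = r := by
  have hnoise : b - ∑ j, aSum j * s j = ((∑ i ∈ S, e i + r * (q / 2 : ℕ) : ℤ) : ZMod q) := by
    rw [hb, ha]
    exact (sum_dotProduct_add_sub_dotProduct_sum S a s (fun i ↦ (e i : ZMod q)) _).trans
      (by simp only [Int.cast_add, Int.cast_sum, Int.cast_mul, Int.cast_natCast])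
  rw [hnoise]
  interval_cases r
  · simpa using Q_intCast_of_abs_lt herr
  · simpa using Q_intCast_add_half_of_abs_lt herr

/-- If the accumulated error satisfies `|∑_{i∈S} e_i| < ⌊q/4⌋`, then LWE
decryption of a well-formed ciphertext recovers the encrypted bit. -/
theorem lwe_decryption_correct
    (q n : ℕ) (hq : ∃ k : ℕ, q = 2 ^ k)
    {ι : Type} (S : Finset ι)
    (s : Fin n → ZMod q) (a : ι → Fin n → ZMod q) (e : ι → ℤ)
    (r : ℕ) (hr : r ≤ 1)
    (herr : |∑ i ∈ S, e i| < (q / 4 : ℕ))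
    (aSum : Fin n → ZMod q) (b : ZMod q)
    (ha : aSum = ∑ i ∈ S, a i)
    (hb : b = (∑ i ∈ S, ((∑ j, a i j * s j) + (e i : ZMod q))) + (r : ZMod q) * ((q / 2 : ℕ) : ZMod q)) :
    Q q (b - ∑ j, aSum j * s j) = r :=
  lwe_decryption_correct_general q n S s a e r hr herr aSum b ha hb
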